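/- arXiv:1009.1460 — 3 statements merged into one kernel-verified Lean document; each statement's English description precedes it below -/
import Mathlib

section
/- Let n be a natural number and let μ be a probability measure on (Fin n → ℝ) that is a product of n probability measures on ℝ. If A and B are both measurable upper sets for the coordinatewise partial order (or both measurable lower sets), then μ(A ∩ B) ≥ μ(A)·μ(B). -/
/-!
Induction on the number of coordinates. Splitting off the first coordinate writes the product
measure as `μ₀ ⊗ ν`, and `(μ₀ ⊗ ν)(A) = ∫ ν(Aₓ) dμ₀(x)`. The sections `Aₓ`, `Bₓ` are again both
upper or both lower, so `x ↦ ν(Aₓ)` and `x ↦ ν(Bₓ)` are monotone in the same direction on the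
line; Chebyshev's integral inequality then gives `μ(A) μ(B) ≤ ∫ ν(Aₓ) ν(Bₓ) dμ₀`, and the
induction hypothesis bounds the integrand by `ν(Aₓ ∩ Bₓ)`, whose integral is `μ(A ∩ B)`.
-/

open MeasureTheory ENNReal

theorem ENNReal.mul_add_mul_le_mul_add_mul {a b c d : ℝ≥0∞} (hab : a ≤ b) (hcd : c ≤ d) :
    a * d + b * c ≤ a * c + b * d := by
  obtain ⟨d, rfl⟩ := exists_add_of_le hcd
  calc a * (c + d) + b * c = a * c + a * d + b * c := by rw [mul_add]
    _ ≤ a * c + b * d + b * c := by gcongr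
    _ = a * c + b * (c + d) := by ring

theorem Monovary.ennreal_mul_add_mul_le_mul_add_mul {ι : Type*} {f g : ι → ℝ≥0∞}
    (hfg : Monovary f g) (i j : ι) : f i * g j + f j * g i ≤ f i * g i + f j * g j := by
  rcases lt_trichotomy (g i) (g j) with h | h | h
  · exact ENNReal.mul_add_mul_le_mul_add_mul (hfg h) h.le
  · rw [h]
  · rw [add_comm, add_comm (f i * g i)]
    exact ENNReal.mul_add_mul_le_mul_add_mul (hfg h) h.le

theorem lintegral_mul_lintegral_le_lintegral_mul {α : Type*} [MeasurableSpace α]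
    {μ : Measure α} [IsProbabilityMeasure μ] {f g : α → ℝ≥0∞}
    (hf : Measurable f) (hg : Measurable g) (hfg : Monovary f g) :
    (∫⁻ x, f x ∂μ) * ∫⁻ x, g x ∂μ ≤ ∫⁻ x, f x * g x ∂μ := by
  -- average the rearrangement inequality over two independent copies of `x`
  have hsymm : ∫⁻ x, ∫⁻ y, (f x * g y + f y * g x) ∂μ ∂μ =
      2 * ((∫⁻ x, f x ∂μ) * ∫⁻ x, g x ∂μ) := by
    simp_rw [lintegral_add_left (hg.const_mul _), lintegral_mul_const _ hf]
    rw [lintegral_add_right _ (hg.const_mul _), lintegral_lintegral_mul hf.aemeasurable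
      hg.aemeasurable, lintegral_const_mul _ hg, two_mul]
  have hdiag : ∫⁻ x, ∫⁻ y, (f x * g x + f y * g y) ∂μ ∂μ = 2 * ∫⁻ x, f x * g x ∂μ := by
    simp_rw [lintegral_add_right (g := fun y ↦ f y * g y) _ (hf.mul hg), lintegral_const,
      measure_univ, mul_one]
    rw [lintegral_add_left (f := fun x ↦ f x * g x) (hf.mul hg), lintegral_const, measure_univ,
      mul_one, two_mul]
  refine (ENNReal.mul_le_mul_iff_right two_ne_zero ofNat_ne_top).mp ?_
  rw [← hsymm, ← hdiag]
  exact lintegral_mono fun x ↦ lintegral_mono fun y ↦ hfg.ennreal_mul_add_mul_le_mul_add_mul x y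

section Harris

variable {α β : Type*}

def BothUpperOrBothLower [LE α] (A B : Set α) : Prop :=
  (IsUpperSet A ∧ IsUpperSet B) ∨ (IsLowerSet A ∧ IsLowerSet B)

theorem BothUpperOrBothLower.preimage [Preorder α] [Preorder β] {A B : Set β} {f : α → β}
    (h : BothUpperOrBothLower A B) (hf : Monotone f) :
    BothUpperOrBothLower (f ⁻¹' A) (f ⁻¹' B) := by
  rcases h with ⟨hA, hB⟩ | ⟨hA, hB⟩
  · exact .inl ⟨hA.preimage hf, hB.preimage hf⟩
  · exact .inr ⟨hA.preimage hf, hB.preimage hf⟩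

theorem BothUpperOrBothLower.monovary_measure_prodMk [LinearOrder α] [Preorder β]
    [MeasurableSpace β] (ν : Measure β) {S T : Set (α × β)} (h : BothUpperOrBothLower S T) :
    Monovary (fun x ↦ ν (Prod.mk x ⁻¹' S)) (fun x ↦ ν (Prod.mk x ⁻¹' T)) := by
  rcases h with ⟨hS, hT⟩ | ⟨hS, hT⟩
  · exact Monotone.monovary (fun x x' hx ↦ measure_mono fun y hy ↦ hS (Prod.mk_le_mk.2 ⟨hx, le_rfl⟩) hy)
      (fun x x' hx ↦ measure_mono fun y hy ↦ hT (Prod.mk_le_mk.2 ⟨hx, le_rfl⟩) hy)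
  · exact Antitone.monovary (fun x x' hx ↦ measure_mono fun y hy ↦ hS (Prod.mk_le_mk.2 ⟨hx, le_rfl⟩) hy)
      (fun x x' hx ↦ measure_mono fun y hy ↦ hT (Prod.mk_le_mk.2 ⟨hx, le_rfl⟩) hy)

def SatisfiesHarrisInequality [LE α] [MeasurableSpace α] (μ : Measure α) : Prop :=
  ∀ ⦃A B : Set α⦄, MeasurableSet A → MeasurableSet B → BothUpperOrBothLower A B →
    μ A * μ B ≤ μ (A ∩ B)

variable [MeasurableSpace α] [MeasurableSpace β]

theorem satisfiesHarrisInequality_of_subsingleton [LE α] [Subsingleton α] (μ : Measure α)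
    [IsProbabilityMeasure μ] : SatisfiesHarrisInequality μ := by
  intro A B _ _ _
  rcases A.eq_empty_or_nonempty with rfl | hA
  · simp
  · simp [hA.eq_univ]

theorem SatisfiesHarrisInequality.map [Preorder α] [Preorder β] {μ : Measure α}
    (hμ : SatisfiesHarrisInequality μ) {f : α → β} (hf : Monotone f) (hfm : Measurable f) :
    SatisfiesHarrisInequality (μ.map f) := by
  intro A B hA hB hAB
  rw [Measure.map_apply hfm hA, Measure.map_apply hfm hB, Measure.map_apply hfm (hA.inter hB)]
  exact hμ (hfm hA) (hfm hB) (hAB.preimage hf)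

theorem SatisfiesHarrisInequality.prod [LinearOrder α] [Preorder β] (μ : Measure α)
    [IsProbabilityMeasure μ] {ν : Measure β} [SFinite ν] (hν : SatisfiesHarrisInequality ν) :
    SatisfiesHarrisInequality (μ.prod ν) := by
  intro S T hS hT hST
  have hsection (x : α) :
      ν (Prod.mk x ⁻¹' S) * ν (Prod.mk x ⁻¹' T) ≤ ν (Prod.mk x ⁻¹' (S ∩ T)) :=
    hν (measurable_prodMk_left hS) (measurable_prodMk_left hT)
      (hST.preimage (monotone_const.prodMk monotone_id))
  calc μ.prod ν S * μ.prod ν T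
      = (∫⁻ x, ν (Prod.mk x ⁻¹' S) ∂μ) * ∫⁻ x, ν (Prod.mk x ⁻¹' T) ∂μ := by
        rw [Measure.prod_apply hS, Measure.prod_apply hT]
    _ ≤ ∫⁻ x, ν (Prod.mk x ⁻¹' S) * ν (Prod.mk x ⁻¹' T) ∂μ :=
        lintegral_mul_lintegral_le_lintegral_mul (measurable_measure_prodMk_left hS)
          (measurable_measure_prodMk_left hT) (hST.monovary_measure_prodMk ν)
    _ ≤ ∫⁻ x, ν (Prod.mk x ⁻¹' (S ∩ T)) ∂μ := lintegral_mono hsection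
    _ = μ.prod ν (S ∩ T) := (Measure.prod_apply (hS.inter hT)).symm

end Harris

theorem MeasurableEquiv.monotone_piFinSuccAbove_symm {n : ℕ} {α : Fin (n + 1) → Type*}
    [∀ i, Preorder (α i)] [∀ i, MeasurableSpace (α i)] (i : Fin (n + 1)) :
    Monotone (MeasurableEquiv.piFinSuccAbove α i).symm := by
  intro p q hpq
  change Fin.insertNth i p.1 p.2 ≤ Fin.insertNth i q.1 q.2
  rw [Fin.insertNth_le_iff, Fin.insertNth_apply_same]
  simpa only [Fin.insertNth_apply_succAbove] using Prod.mk_le_mk.1 hpq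

theorem satisfiesHarrisInequality_pi {n : ℕ} {α : Fin n → Type*} [∀ i, LinearOrder (α i)]
    [∀ i, MeasurableSpace (α i)] (μ : ∀ i, Measure (α i)) [∀ i, IsProbabilityMeasure (μ i)] :
    SatisfiesHarrisInequality (Measure.pi μ) := by
  induction n with
  | zero => exact satisfiesHarrisInequality_of_subsingleton _
  | succ n ih =>
    rw [← (measurePreserving_piFinSuccAbove μ 0).symm.map_eq]
    exact ((ih _).prod (μ 0)).map (MeasurableEquiv.monotone_piFinSuccAbove_symm 0)
      (MeasurableEquiv.measurable _)

/-- FKG/Harris inequality for events under a product probability measure: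
two measurable upper sets (increasing events), or two measurable lower sets
(decreasing events), are positively correlated. -/
theorem fkg_inequality_events (n : ℕ) (μi : Fin n → Measure ℝ)
    [∀ i, IsProbabilityMeasure (μi i)]
    (A B : Set (Fin n → ℝ))
    (hA : MeasurableSet A) (hB : MeasurableSet B)
    (hmono : (IsUpperSet A ∧ IsUpperSet B) ∨ (IsLowerSet A ∧ IsLowerSet B)) :
    Measure.pi μi (A ∩ B) ≥ Measure.pi μi A * Measure.pi μi B :=
  satisfiesHarrisInequality_pi μi hA hB hmono
end

section
/- Let α > 2, δ = 2/α, and let B₁, B₂, F > 0. Define f : (0,F) → ℝ by f(x) = (2^{B₁/x} − 1)^δ + (2^{B₂/(F−x)} − 1)^δ, and h : (0,∞) → ℝ by h(t) = t²·2^t·(2^t − 1)^{δ−1}. Then there exists a unique x* ∈ (0,F) satisfying the equation (1/B₁)·h(B₁/x*) = (1/B₂)·h(B₂/(F−x*)), and this x* is the unique global minimizer of f on (0,F), i.e., f(x) > f(x*) for every x ∈ (0,F) with x ≠ x*. -/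
/-!
With `g_B(x) = h(B/x)/B`, the derivative of the objective is
`f'(x) = -δ log 2 · (g_{B₁}(x) - g_{B₂}(F - x))`. The inequality `2^t - 1 ≥ t log 2` makes
`h` strictly increasing, so this gap is strictly decreasing in `x`; and `h(t) ≥ t²` sends it
to `+∞` at `0` and to `-∞` at `F`. Hence it has exactly one zero `x*`, and `f` strictly
decreases before `x*` and strictly increases after it.
-/

open Real Filter Topology Set

/-- The paper's `h`. -/
noncomputable def weightedSlope (δ t : ℝ) : ℝ :=
  t ^ 2 * (2 : ℝ) ^ t * ((2 : ℝ) ^ t - 1) ^ (δ - 1)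

noncomputable def marginalGain (δ B x : ℝ) : ℝ :=
  (1 / B) * weightedSlope δ (B / x)

noncomputable def focGap (δ B₁ B₂ F x : ℝ) : ℝ :=
  marginalGain δ B₁ x - marginalGain δ B₂ (F - x)

lemma mul_log_two_le_two_rpow_sub_one (t : ℝ) : t * log 2 ≤ (2 : ℝ) ^ t - 1 := by
  rw [rpow_def_of_pos two_pos, mul_comm t]
  linarith [add_one_le_exp (log 2 * t)]

lemma two_rpow_sub_one_pos {t : ℝ} (ht : 0 < t) : 0 < (2 : ℝ) ^ t - 1 :=
  sub_pos.2 (one_lt_rpow one_lt_two ht)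

lemma hasDerivAt_weightedSlope (δ : ℝ) {t : ℝ} (ht : 0 < t) :
    HasDerivAt (weightedSlope δ)
      (t * 2 ^ t * (2 ^ t - 1) ^ (δ - 2) *
        (2 * (2 ^ t - 1) + t * log 2 * (δ * 2 ^ t - 1))) t := by
  have hu := two_rpow_sub_one_pos ht
  have hexp : HasDerivAt (fun s : ℝ => (2 : ℝ) ^ s) (2 ^ t * log 2) t :=
    (hasStrictDerivAt_const_rpow two_pos t).hasDerivAt
  refine (((hasDerivAt_pow 2 t).mul hexp).mul
    ((hexp.sub_const 1).rpow_const (p := δ - 1) (Or.inl hu.ne'))).congr_deriv ?_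
  rw [show δ - 1 - 1 = δ - 2 by ring, show δ - 1 = δ - 2 + 1 by ring, rpow_add_one hu.ne']
  simp only [Pi.mul_apply]
  norm_num
  ring

lemma weightedSlope_strictMonoOn {δ : ℝ} (hδ : 0 < δ) :
    StrictMonoOn (weightedSlope δ) (Ioi 0) := by
  refine strictMonoOn_of_hasDerivWithinAt_pos (convex_Ioi 0)
    (fun t ht => (hasDerivAt_weightedSlope δ ht).continuousAt.continuousWithinAt)
    (fun t ht => (hasDerivAt_weightedSlope δ (interior_subset ht)).hasDerivWithinAt) ?_
  rw [interior_Ioi]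
  intro t (ht : 0 < t)
  have hu := two_rpow_sub_one_pos ht
  have hlog := mul_log_two_le_two_rpow_sub_one t
  have htlog : 0 < t * log 2 := mul_pos ht (log_pos one_lt_two)
  have hpos : 0 < t * log 2 * (δ * 2 ^ t) := by positivity
  have hbracket : 0 < 2 * ((2 : ℝ) ^ t - 1) + t * log 2 * (δ * 2 ^ t - 1) := by nlinarith
  positivity

lemma sq_le_weightedSlope {δ t : ℝ} (hδ₀ : 0 ≤ δ) (hδ₁ : δ ≤ 1) (ht : 0 < t) :
    t ^ 2 ≤ weightedSlope δ t := by
  have hu := two_rpow_sub_one_pos ht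
  have h2 : (0 : ℝ) < 2 ^ t := rpow_pos_of_pos two_pos t
  calc t ^ 2 ≤ t ^ 2 * ((2 : ℝ) ^ t) ^ δ :=
        le_mul_of_one_le_right (sq_nonneg t) (one_le_rpow (one_lt_rpow one_lt_two ht).le hδ₀)
    _ = t ^ 2 * (2 ^ t * ((2 : ℝ) ^ t) ^ (δ - 1)) := by
        rw [mul_comm (2 ^ t : ℝ), ← rpow_add_one h2.ne', sub_add_cancel]
    _ ≤ weightedSlope δ t := by
        rw [weightedSlope, mul_assoc]
        exact mul_le_mul_of_nonneg_left (mul_le_mul_of_nonneg_left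
          (rpow_le_rpow_of_nonpos hu (by linarith) (by linarith)) h2.le) (sq_nonneg t)

lemma tendsto_weightedSlope_atTop {δ : ℝ} (hδ₀ : 0 ≤ δ) (hδ₁ : δ ≤ 1) :
    Tendsto (weightedSlope δ) atTop atTop :=
  tendsto_atTop_mono'
    atTop ((eventually_gt_atTop 0).mono fun _ ht => sq_le_weightedSlope hδ₀ hδ₁ ht)
    (tendsto_pow_atTop two_ne_zero)

lemma continuousAt_weightedSlope (δ : ℝ) {t : ℝ} (ht : 0 < t) :
    ContinuousAt (weightedSlope δ) t :=
  (hasDerivAt_weightedSlope δ ht).continuousAt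

lemma marginalGain_strictAntiOn {δ B : ℝ} (hδ : 0 < δ) (hB : 0 < B) :
    StrictAntiOn (marginalGain δ B) (Ioi 0) := fun x (hx : 0 < x) y (hy : 0 < y) hxy =>
  mul_lt_mul_of_pos_left (weightedSlope_strictMonoOn hδ (div_pos hB hy) (div_pos hB hx)
    (div_lt_div_of_pos_left hB hx hxy)) (by positivity)

lemma continuousAt_marginalGain (δ : ℝ) {B x : ℝ} (hB : 0 < B) (hx : 0 < x) :
    ContinuousAt (marginalGain δ B) x :=
  continuousAt_const.mul <| (continuousAt_weightedSlope δ (div_pos hB hx)).comp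
    (continuousAt_const.div continuousAt_id hx.ne')

lemma tendsto_marginalGain_nhdsGT_zero {δ B : ℝ} (hδ₀ : 0 ≤ δ) (hδ₁ : δ ≤ 1) (hB : 0 < B) :
    Tendsto (marginalGain δ B) (𝓝[>] 0) atTop := by
  have hratio : Tendsto (fun x : ℝ => B / x) (𝓝[>] 0) atTop := by
    simpa only [div_eq_mul_inv] using tendsto_inv_nhdsGT_zero.const_mul_atTop hB
  exact ((tendsto_weightedSlope_atTop hδ₀ hδ₁).comp hratio).const_mul_atTop (by positivity)

lemma hasDerivAt_rpow_two_rpow_div_sub_one (δ : ℝ) {B x : ℝ} (hB : 0 < B) (hx : 0 < x) :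
    HasDerivAt (fun x => ((2 : ℝ) ^ (B / x) - 1) ^ δ) (-(δ * log 2 * marginalGain δ B x)) x := by
  have hratio : HasDerivAt (fun x => B / x) (-(B / x ^ 2)) x := by
    simpa [div_eq_mul_inv] using (hasDerivAt_inv hx.ne').const_mul B
  have hexp : HasDerivAt (fun x => (2 : ℝ) ^ (B / x)) (2 ^ (B / x) * log 2 * -(B / x ^ 2)) x :=
    (hasStrictDerivAt_const_rpow two_pos (B / x)).hasDerivAt.comp x hratio
  refine ((hexp.sub_const 1).rpow_const (p := δ)
    (Or.inl (two_rpow_sub_one_pos (div_pos hB hx)).ne')).congr_deriv ?_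
  simp only [marginalGain, weightedSlope]
  field_simp

lemma focGap_strictAntiOn {δ B₁ B₂ F : ℝ} (hδ : 0 < δ) (hB₁ : 0 < B₁) (hB₂ : 0 < B₂) :
    StrictAntiOn (focGap δ B₁ B₂ F) (Ioo 0 F) := fun x hx y hy hxy =>
  sub_lt_sub (marginalGain_strictAntiOn hδ hB₁ hx.1 hy.1 hxy)
    (marginalGain_strictAntiOn hδ hB₂ (sub_pos.2 hy.2) (sub_pos.2 hx.2) (by linarith))

lemma continuousOn_focGap (δ : ℝ) {B₁ B₂ F : ℝ} (hB₁ : 0 < B₁) (hB₂ : 0 < B₂) :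
    ContinuousOn (focGap δ B₁ B₂ F) (Ioo 0 F) := fun _ hx =>
  ((continuousAt_marginalGain δ hB₁ hx.1).sub
    ((continuousAt_marginalGain δ hB₂ (sub_pos.2 hx.2)).comp
      (continuousAt_const.sub continuousAt_id))).continuousWithinAt

lemma tendsto_focGap_nhdsGT_zero {δ B₁ B₂ F : ℝ} (hδ₀ : 0 ≤ δ) (hδ₁ : δ ≤ 1) (hB₁ : 0 < B₁)
    (hB₂ : 0 < B₂) (hF : 0 < F) : Tendsto (focGap δ B₁ B₂ F) (𝓝[>] 0) atTop := by
  have hright :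
      Tendsto (fun x => marginalGain δ B₂ (F - x)) (𝓝[>] 0) (𝓝 (marginalGain δ B₂ F)) := by
    refine ((continuousAt_marginalGain δ hB₂ hF).tendsto.comp ?_).mono_left nhdsWithin_le_nhds
    simpa using (continuous_sub_left F).tendsto 0
  unfold focGap
  simpa only [sub_eq_add_neg] using
    (tendsto_marginalGain_nhdsGT_zero hδ₀ hδ₁ hB₁).atTop_add hright.neg

lemma tendsto_focGap_nhdsLT {δ B₁ B₂ F : ℝ} (hδ₀ : 0 ≤ δ) (hδ₁ : δ ≤ 1) (hB₁ : 0 < B₁)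
    (hB₂ : 0 < B₂) (hF : 0 < F) : Tendsto (focGap δ B₁ B₂ F) (𝓝[<] F) atBot := by
  have hleft : Tendsto (marginalGain δ B₁) (𝓝[<] F) (𝓝 (marginalGain δ B₁ F)) :=
    (continuousAt_marginalGain δ hB₁ hF).tendsto.mono_left nhdsWithin_le_nhds
  have hsub : Tendsto (fun x => F - x) (𝓝[<] F) (𝓝[>] 0) :=
    tendsto_nhdsWithin_iff.2
      ⟨by simpa using ((continuous_sub_left F).tendsto F).mono_left nhdsWithin_le_nhds,
        eventually_nhdsWithin_of_forall fun x hx => mem_Ioi.2 (sub_pos.2 hx)⟩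
  unfold focGap
  simpa only [sub_eq_add_neg, Function.comp_def] using
    hleft.add_atBot (tendsto_neg_atTop_atBot.comp
      ((tendsto_marginalGain_nhdsGT_zero hδ₀ hδ₁ hB₂).comp hsub))

lemma hasDerivAt_bandwidthCost (δ : ℝ) {B₁ B₂ F x : ℝ} (hB₁ : 0 < B₁) (hB₂ : 0 < B₂)
    (hx : x ∈ Ioo 0 F) :
    HasDerivAt (fun x => ((2 : ℝ) ^ (B₁ / x) - 1) ^ δ + ((2 : ℝ) ^ (B₂ / (F - x)) - 1) ^ δ)
      (-(δ * log 2 * focGap δ B₁ B₂ F x)) x := by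
  have h₂ := (hasDerivAt_rpow_two_rpow_div_sub_one δ hB₂ (sub_pos.2 hx.2)).comp x
    ((hasDerivAt_id x).const_sub F)
  refine ((hasDerivAt_rpow_two_rpow_div_sub_one δ hB₁ hx.1).add h₂).congr_deriv ?_
  rw [focGap]
  ring

lemma StrictAntiOn.exists_zero_unique_of_tendsto {φ : ℝ → ℝ} {a b : ℝ} (hab : a < b)
    (hφ : StrictAntiOn φ (Ioo a b)) (hcont : ContinuousOn φ (Ioo a b))
    (hleft : Tendsto φ (𝓝[>] a) atTop) (hright : Tendsto φ (𝓝[<] b) atBot) :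
    ∃ x ∈ Ioo a b, φ x = 0 ∧ ∀ y ∈ Ioo a b, φ y = 0 → y = x := by
  obtain ⟨x, hx, hφx⟩ := hcont.surjOn_of_tendsto' (nonempty_Ioo.2 hab)
    ((tendsto_comp_coe_Ioo_atBot hab).2 hleft) ((tendsto_comp_coe_Ioo_atTop hab).2 hright)
    (mem_univ 0)
  exact ⟨x, hx, hφx, fun y hy hφy => hφ.injOn hy hx (hφy.trans hφx.symm)⟩

lemma lt_of_hasDerivAt_sign_change {f f' : ℝ → ℝ} {a b x : ℝ} (hx : x ∈ Ioo a b)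
    (hf : ∀ z ∈ Ioo a b, HasDerivAt f (f' z) z)
    (hneg : ∀ z ∈ Ioo a x, f' z < 0) (hpos : ∀ z ∈ Ioo x b, 0 < f' z) :
    ∀ y ∈ Ioo a b, y ≠ x → f x < f y := by
  have hcont : ContinuousOn f (Ioo a b) := fun z hz =>
    (hf z hz).continuousAt.continuousWithinAt
  have hanti : StrictAntiOn f (Ioc a x) := by
    refine strictAntiOn_of_hasDerivWithinAt_neg (convex_Ioc a x)
      (hcont.mono (Ioc_subset_Ioo_right hx.2)) (fun z hz => ?_) (by rwa [interior_Ioc])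
    rw [interior_Ioc] at hz ⊢
    exact (hf z ⟨hz.1, hz.2.trans hx.2⟩).hasDerivWithinAt
  have hmono : StrictMonoOn f (Ico x b) := by
    refine strictMonoOn_of_hasDerivWithinAt_pos (convex_Ico x b)
      (hcont.mono (Ico_subset_Ioo_left hx.1)) (fun z hz => ?_) (by rwa [interior_Ico])
    rw [interior_Ico] at hz ⊢
    exact (hf z ⟨hx.1.trans hz.1, hz.2⟩).hasDerivWithinAt
  intro y hy hyx
  rcases hyx.lt_or_gt with hyx | hxy
  · exact hanti ⟨hy.1, hyx.le⟩ ⟨hx.1, le_rfl⟩ hyx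
  · exact hmono ⟨le_rfl, hx.2⟩ ⟨hxy.le, hy.2⟩ hxy

/-- Theorem 2 of the paper: there is a unique `x* ∈ (0, F)` solving the
first-order condition `(1/B₁) h(B₁/x*) = (1/B₂) h(B₂/(F−x*))` with
`h(t) = t² 2^t (2^t − 1)^{δ−1}`, `δ = 2/α`, and this `x*` is the unique
global minimizer of
`f(x) = (2^{B₁/x} − 1)^δ + (2^{B₂/(F−x)} − 1)^δ` on `(0, F)`. -/
theorem optimal_bandwidth_allocation (α : ℝ) (hα : 2 < α) (B₁ B₂ F : ℝ)
    (hB₁ : 0 < B₁) (hB₂ : 0 < B₂) (hF : 0 < F) :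
    ∃ x ∈ Set.Ioo (0 : ℝ) F,
      ((1 / B₁) *
          ((B₁ / x) ^ 2 * (2 : ℝ) ^ (B₁ / x) *
            ((2 : ℝ) ^ (B₁ / x) - 1) ^ (2 / α - 1)) =
        (1 / B₂) *
          ((B₂ / (F - x)) ^ 2 * (2 : ℝ) ^ (B₂ / (F - x)) *
            ((2 : ℝ) ^ (B₂ / (F - x)) - 1) ^ (2 / α - 1))) ∧
      (∀ y ∈ Set.Ioo (0 : ℝ) F,
        ((1 / B₁) *
            ((B₁ / y) ^ 2 * (2 : ℝ) ^ (B₁ / y) *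
              ((2 : ℝ) ^ (B₁ / y) - 1) ^ (2 / α - 1)) =
          (1 / B₂) *
            ((B₂ / (F - y)) ^ 2 * (2 : ℝ) ^ (B₂ / (F - y)) *
              ((2 : ℝ) ^ (B₂ / (F - y)) - 1) ^ (2 / α - 1))) → y = x) ∧
      (∀ y ∈ Set.Ioo (0 : ℝ) F, y ≠ x →
        ((2 : ℝ) ^ (B₁ / x) - 1) ^ (2 / α) + ((2 : ℝ) ^ (B₂ / (F - x)) - 1) ^ (2 / α) <
          ((2 : ℝ) ^ (B₁ / y) - 1) ^ (2 / α) + ((2 : ℝ) ^ (B₂ / (F - y)) - 1) ^ (2 / α)) := by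
  have hδ₀ : 0 < 2 / α := by positivity
  have hδ₁ : 2 / α ≤ 1 := (div_le_one (by linarith)).2 hα.le
  have hgap_anti := focGap_strictAntiOn (F := F) hδ₀ hB₁ hB₂
  obtain ⟨x, hx, hgap, huniq⟩ := hgap_anti.exists_zero_unique_of_tendsto hF
    (continuousOn_focGap _ hB₁ hB₂) (tendsto_focGap_nhdsGT_zero hδ₀.le hδ₁ hB₁ hB₂ hF)
    (tendsto_focGap_nhdsLT hδ₀.le hδ₁ hB₁ hB₂ hF)
  refine ⟨x, hx, sub_eq_zero.1 hgap, fun y hy hy' => huniq y hy (sub_eq_zero.2 hy'), ?_⟩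
  have hc : 0 < 2 / α * log 2 := mul_pos hδ₀ (log_pos one_lt_two)
  refine lt_of_hasDerivAt_sign_change hx (fun z hz => hasDerivAt_bandwidthCost _ hB₁ hB₂ hz)
    (fun z hz => ?_) (fun z hz => ?_)
  · exact neg_neg_of_pos
      (mul_pos hc (hgap ▸ hgap_anti ⟨hz.1, hz.2.trans hx.2⟩ hx hz.2))
  · exact neg_pos.2
      (mul_neg_of_pos_of_neg hc (hgap ▸ hgap_anti hx ⟨hx.1.trans hz.1, hz.2⟩ hz.1))
end

section
/- Let α > 2, δ = 2/α, and let B, F > 0. Define f : (0,F) → ℝ by f(x) = (2^{B/x} − 1)^δ + (2^{B/(F−x)} − 1)^δ (the symmetric-traffic case B₁ = B₂ = B). Then x = F/2 is the unique global minimizer of f on (0,F): f(F/2) < f(x) for every x ∈ (0,F) with x ≠ F/2. -/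
open Real Set

/-!
With `c = B log 2`, each summand is `exp (δ · g t)` where `g t = log (exp (c / t) - 1)`.
The derivative of `g` is `-k (c / t) / c` with `k u = u² / (1 - e^{-u})`, and `k` is strictly
increasing because `(1 - e^{-u}) / u` is a secant slope of the strictly convex `exp`. Hence `g`,
and with it `t ↦ (2^{B/t} - 1)^δ`, is strictly convex on `(0, ∞)`, so the sum of its values at
`x` and `F - x` exceeds twice its value at the midpoint `F / 2`.
-/

theorem strictMonoOn_sq_div_one_sub_exp_neg :
    StrictMonoOn (fun u : ℝ => u ^ 2 / (1 - exp (-u))) (Ioi 0) := by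
  intro u (hu : 0 < u) v (hv : 0 < v) huv
  have hslope : (1 - exp (-v)) / v < (1 - exp (-u)) / u := by
    have := strictConvexOn_exp.secant_strict_mono (mem_univ 0) (mem_univ (-v)) (mem_univ (-u))
      (by linarith) (by linarith) (by linarith)
    simp only [exp_zero, sub_zero] at this
    rwa [← neg_div_neg_eq, neg_sub, neg_neg, ← neg_div_neg_eq (exp (-u) - 1), neg_sub,
      neg_neg] at this
  have hpos : ∀ w : ℝ, 0 < w → 0 < 1 - exp (-w) := fun w hw => by
    simpa using exp_lt_one_iff.2 (neg_lt_zero.2 hw)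
  have hratio : u / (1 - exp (-u)) < v / (1 - exp (-v)) := by
    rw [div_lt_div_iff₀ hv hu] at hslope
    rw [div_lt_div_iff₀ (hpos u hu) (hpos v hv)]
    linarith
  calc u ^ 2 / (1 - exp (-u)) = u * (u / (1 - exp (-u))) := by ring
    _ < v * (v / (1 - exp (-v))) := mul_lt_mul'' huv hratio hu.le (div_pos hu (hpos u hu)).le
    _ = v ^ 2 / (1 - exp (-v)) := by ring

theorem hasDerivAt_log_exp_div_sub_one {c t : ℝ} (hc : 0 < c) (ht : 0 < t) :
    HasDerivAt (fun t => log (exp (c / t) - 1)) (-((c / t) ^ 2 / (1 - exp (-(c / t)))) / c) t := by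
  have hexp : 1 < exp (c * t⁻¹) := one_lt_exp_iff.2 (by positivity)
  have h := (((hasDerivAt_inv ht.ne').const_mul c).exp.sub_const 1).log (by linarith)
  convert h using 1
  · ext s; simp [div_eq_mul_inv]
  · rw [exp_neg, div_eq_mul_inv c t]
    field_simp

theorem strictConvexOn_log_exp_div_sub_one {c : ℝ} (hc : 0 < c) :
    StrictConvexOn ℝ (Ioi 0) (fun t => log (exp (c / t) - 1)) := by
  have hderiv := fun t (ht : t ∈ Ioi (0 : ℝ)) => hasDerivAt_log_exp_div_sub_one hc ht
  refine StrictMonoOn.strictConvexOn_of_deriv (convex_Ioi 0)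
    (fun t ht => (hderiv t ht).continuousAt.continuousWithinAt) ?_
  rw [interior_Ioi]
  intro s (hs : 0 < s) t (ht : 0 < t) hst
  rw [(hderiv s hs).deriv, (hderiv t ht).deriv, div_lt_div_iff_of_pos_right hc, neg_lt_neg_iff]
  exact strictMonoOn_sq_div_one_sub_exp_neg (div_pos hc ht) (div_pos hc hs)
    (div_lt_div_of_pos_left hc hs hst)

section

variable {E : Type*} [AddCommMonoid E] [Module ℝ E] {s : Set E} {f : E → ℝ}

theorem StrictConvexOn.const_mul {c : ℝ} (hc : 0 < c) (hf : StrictConvexOn ℝ s f) :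
    StrictConvexOn ℝ s (fun x => c * f x) :=
  ⟨hf.1, fun x hx y hy hxy a b ha hb hab => by
    have := mul_lt_mul_of_pos_left (hf.2 hx hy hxy ha hb hab) hc
    simp only [smul_eq_mul] at this ⊢
    linarith⟩

theorem StrictConvexOn.exp (hf : StrictConvexOn ℝ s f) :
    StrictConvexOn ℝ s (fun x => exp (f x)) :=
  ⟨hf.1, fun _ hx _ hy hxy _ _ ha hb hab =>
    (exp_lt_exp.2 (hf.2 hx hy hxy ha hb hab)).trans_le
      (convexOn_exp.2 (mem_univ _) (mem_univ _) ha.le hb.le hab)⟩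

end

theorem strictConvexOn_rpow_div_sub_one_rpow {a B δ : ℝ} (ha : 1 < a) (hB : 0 < B) (hδ : 0 < δ) :
    StrictConvexOn ℝ (Ioi 0) (fun t => (a ^ (B / t) - 1) ^ δ) := by
  refine (((strictConvexOn_log_exp_div_sub_one (mul_pos hB (log_pos ha))).const_mul hδ).exp).congr
    fun t (ht : 0 < t) => ?_
  have hpow : a ^ (B / t) = exp (B * log a / t) := by
    rw [rpow_def_of_pos (by linarith)]; ring_nf
  have hpos : 0 < a ^ (B / t) - 1 := sub_pos.2 (one_lt_rpow ha (div_pos hB ht))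
  change exp (δ * log (exp (B * log a / t) - 1)) = _
  rw [rpow_def_of_pos hpos, hpow, mul_comm]

/-- Symmetric traffic: with equal rate requirements `B₁ = B₂ = B`, the equal
split `x = F/2` is the unique global minimizer of
`f(x) = (2^{B/x} − 1)^{2/α} + (2^{B/(F−x)} − 1)^{2/α}` on `(0, F)`. -/
theorem symmetric_traffic_equal_split (α : ℝ) (hα : 2 < α) (B F : ℝ)
    (hB : 0 < B) (hF : 0 < F) :
    F / 2 ∈ Set.Ioo (0 : ℝ) F ∧
    ∀ x ∈ Set.Ioo (0 : ℝ) F, x ≠ F / 2 →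
      ((2 : ℝ) ^ (B / (F / 2)) - 1) ^ (2 / α) +
          ((2 : ℝ) ^ (B / (F - F / 2)) - 1) ^ (2 / α) <
        ((2 : ℝ) ^ (B / x) - 1) ^ (2 / α) + ((2 : ℝ) ^ (B / (F - x)) - 1) ^ (2 / α) := by
  refine ⟨⟨by linarith, by linarith⟩, fun x ⟨hx, hxF⟩ hne => ?_⟩
  have hconv := strictConvexOn_rpow_div_sub_one_rpow one_lt_two hB
    (div_pos two_pos (by linarith : (0 : ℝ) < α))
  have hmid := hconv.2 (mem_Ioi.2 hx) (mem_Ioi.2 (sub_pos.2 hxF))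
    (fun h => hne (by linarith)) one_half_pos one_half_pos (add_halves 1)
  simp only [smul_eq_mul, show 1 / 2 * x + 1 / 2 * (F - x) = F / 2 by ring] at hmid
  rw [show F - F / 2 = F / 2 by ring]
  linarith
end
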